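/- Let A ⟶f B ⟶g C ⟶h A⟦1⟧ be a distinguished triangle in C. If h factors through an object of N and B belongs to N, then C belongs to N. -/

import Mathlib

open CategoryTheory CategoryTheory.Limits CategoryTheory.Pretriangulated

universe v u v₂ u₂

variable {C : Type u} [Category.{v} C] [Preadditive C] [HasZeroObject C]
  [HasShift C ℤ] [∀ n : ℤ, (shiftFunctor C n).Additive] [Pretriangulated C]

/-- `f : X ⟶ Y` factors through an object of `N`. -/
def FactorsThru (N : Set C) {X Y : C} (f : X ⟶ Y) : Prop :=
  ∃ (Z : C) (_ : Z ∈ N) (u : X ⟶ Z) (v : Z ⟶ Y), f = u ≫ v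

/-- The morphism `X⟦-1⟧ ⟶ A` obtained from `h : X ⟶ A⟦1⟧` by shifting by `-1` and
composing with the canonical isomorphism `A⟦1⟧⟦-1⟧ ≅ A`. -/
noncomputable def descShift {X A : C} (h : X ⟶ A⟦(1:ℤ)⟧) : X⟦(-1:ℤ)⟧ ⟶ A :=
  h⟦(-1:ℤ)⟧' ≫ (shiftEquiv C (1:ℤ)).unitIso.inv.app A

/-- The class `S_N` of morphisms fitting in a distinguished triangle whose two other
maps factor through `N`. -/
def SN (N : Set C) {B C₀ : C} (g : B ⟶ C₀) : Prop :=
  ∃ (A : C) (f : A ⟶ B) (h : C₀ ⟶ A⟦(1:ℤ)⟧),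
    (Triangle.mk f g h ∈ distTriang C) ∧ FactorsThru N f ∧ FactorsThru N h

/-- The class `L`. -/
def ClassL (N : Set C) {A B : C} (f : A ⟶ B) : Prop :=
  ∃ (N₀ : C) (_ : N₀ ∈ N) (g : B ⟶ N₀) (h : N₀ ⟶ A⟦(1:ℤ)⟧),
    (Triangle.mk f g h ∈ distTriang C) ∧ FactorsThru N (descShift h)

/-- The class `R`. -/
def ClassR (N : Set C) {B C₀ : C} (g : B ⟶ C₀) : Prop :=
  ∃ (N₀ : C) (_ : N₀ ∈ N) (f : N₀ ⟶ B) (h : C₀ ⟶ N₀⟦(1:ℤ)⟧),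
    (Triangle.mk f g h ∈ distTriang C) ∧ FactorsThru N h

/-- Condition (Lex) on a morphism `h : C₀ ⟶ A⟦1⟧`. -/
def LexCond (N : Set C) {C₀ A : C} (h : C₀ ⟶ A⟦(1:ℤ)⟧) : Prop :=
  ∀ (N₀ : C), N₀ ∈ N → ∀ (x : N₀ ⟶ C₀), FactorsThru N (descShift (x ≫ h))

/-- Condition (Rex) on a morphism `h : C₀ ⟶ A⟦1⟧`. -/
def RexCond (N : Set C) {C₀ A : C} (h : C₀ ⟶ A⟦(1:ℤ)⟧) : Prop :=
  ∀ (N₀ : C), N₀ ∈ N → ∀ (y : A ⟶ N₀),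
    ∃ (M : C) (_ : M ∈ N) (u : C₀⟦(-1:ℤ)⟧ ⟶ M⟦(-1:ℤ)⟧) (v : M⟦(-1:ℤ)⟧ ⟶ N₀),
      descShift h ≫ y = u ≫ v

/-- `S_N` as a morphism property. -/
def SNProp (N : Set C) : MorphismProperty C := fun _ _ g => SN N g

/-
Write `h = u ≫ v` with `u : C₀ ⟶ Z`, `v : Z ⟶ A⟦1⟧`, and complete `Z ⟶ B⟦1⟧` to a distinguished
triangle `B ⟶ Q ⟶ Z ⟶ B⟦1⟧`; then `Q` is an extension of `Z` by `B`. Comparing this triangle with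
the rotation `B ⟶ C₀ ⟶ A⟦1⟧ ⟶ B⟦1⟧` over `𝟙 B` and `v` gives `r : Q ⟶ C₀`, and `u` lifts to
`i : C₀ ⟶ Q`. Then `(𝟙 - i ≫ r) ≫ h = u ≫ v - u ≫ v = 0`, so `𝟙 - i ≫ r = d ≫ g`, and
`C₀` is a retract of `Q ⊞ B`.
-/
lemma exists_retract_biprod_of_distTriang_mor₃_eq_comp {A B C₀ Z : C} {f : A ⟶ B}
    {g : B ⟶ C₀} (u : C₀ ⟶ Z) (v : Z ⟶ A⟦(1:ℤ)⟧)
    (hT : Triangle.mk f g (u ≫ v) ∈ distTriang C) :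
    ∃ (Q : C) (p : B ⟶ Q) (q : Q ⟶ Z),
      Triangle.mk p q (-(v ≫ f⟦(1:ℤ)⟧')) ∈ distTriang C ∧ Nonempty (Retract C₀ (Q ⊞ B)) := by
  obtain ⟨Q, p, q, hT'⟩ := distinguished_cocone_triangle₂ (-(v ≫ f⟦(1:ℤ)⟧'))
  have hcomm : (-(v ≫ f⟦(1:ℤ)⟧')) ≫ (𝟙 B)⟦(1:ℤ)⟧' = v ≫ (-(f⟦(1:ℤ)⟧')) := by
    rw [CategoryTheory.Functor.map_id, Category.comp_id, Preadditive.comp_neg]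
  obtain ⟨r, -, hr⟩ : ∃ r : Q ⟶ C₀, p ≫ r = 𝟙 B ≫ g ∧ q ≫ v = r ≫ u ≫ v :=
    complete_distinguished_triangle_morphism₂ _ _ hT' (rot_of_distTriang _ hT) (𝟙 B) v hcomm
  have hu : u ≫ (-(v ≫ f⟦(1:ℤ)⟧')) = 0 := by
    have hvf : (u ≫ v) ≫ f⟦(1:ℤ)⟧' = 0 := comp_distTriang_mor_zero₃₁ _ hT
    rw [Preadditive.comp_neg, ← Category.assoc, hvf, neg_zero]
  obtain ⟨i, hi⟩ : ∃ i : C₀ ⟶ Q, u = i ≫ q := Triangle.coyoneda_exact₃ _ hT' u hu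
  have hir : (𝟙 C₀ - i ≫ r) ≫ u ≫ v = 0 := by
    rw [Preadditive.sub_comp, Category.id_comp, Category.assoc, ← hr, ← Category.assoc, ← hi,
      sub_self]
  obtain ⟨d, hd⟩ : ∃ d : C₀ ⟶ B, 𝟙 C₀ - i ≫ r = d ≫ g := Triangle.coyoneda_exact₃ _ hT _ hir
  refine ⟨Q, p, q, hT', ⟨{ i := biprod.lift i d, r := biprod.desc r g, retract := ?_ }⟩⟩
  rw [biprod.lift_desc, ← hd, add_sub_cancel]

theorem stmt1 (N : Set C)
    (hNsum : ∀ ⦃X Z : C⦄ (i : X ⟶ Z) (r : Z ⟶ X), i ≫ r = 𝟙 X → Z ∈ N → X ∈ N)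
    (hNext : ∀ (T : Triangle C), (T ∈ distTriang C) → T.obj₁ ∈ N → T.obj₃ ∈ N → T.obj₂ ∈ N)
    {A B C₀ : C} (f : A ⟶ B) (g : B ⟶ C₀) (h : C₀ ⟶ A⟦(1:ℤ)⟧)
    (hT : Triangle.mk f g h ∈ distTriang C)
    (hh : FactorsThru N h) (hB : B ∈ N) :
    C₀ ∈ N := by
  obtain ⟨Z, hZ, u, v, rfl⟩ := hh
  obtain ⟨Q, p, q, hT', ⟨e⟩⟩ := exists_retract_biprod_of_distTriang_mor₃_eq_comp u v hT
  have hQ : Q ∈ N := hNext _ hT' hB hZ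
  have hQB : (Q ⊞ B : C) ∈ N := hNext _ (binaryBiproductTriangle_distinguished Q B) hQ hB
  exact hNsum e.i e.r e.retract hQB
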